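/- arXiv:1708.07441 — 2 statements merged into one kernel-verified Lean document; each statement's English description precedes it below -/
import Mathlib

section
/- Let B ⊆ ℝⁿ be measurable, L_λ bounded below on B, and let u, v : B → ℝ be nonnegative measurable functions. Suppose for some δ₀ ≥ 0 the integrals ∫_B exp(-δ₀ L_λ), ∫_B u·exp(-δ₀ L_λ), ∫_B v·exp(-δ₀ L_λ), ∫_B L_λ exp(-δ₀ L_λ), ∫_B u·L_λ·exp(-δ₀ L_λ), and ∫_B v·L_λ·exp(-δ₀ L_λ) all exist and are finite. Define F(δ) = E_δ[u]·E_δ[v], where E_δ is expectation under the Gibbs density p_δ(θ) ∝ exp(-δ L_λ(θ)) on B. Then F is differentiable on (δ₀,∞) with F'(δ) = -Cov_δ(u, L_λ)·E_δ[v] - E_δ[u]·Cov_δ(v, L_λ). -/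
/-!
Since `L` is bounded below, replacing `f` by the integrable `g = f e^{-δ₀ L}` reduces everything
to `t ↦ ∫ g e^{-t L}` for `t > 0`. There `e^{-t L}` is bounded and `|L| e^{-t L}` is bounded
locally uniformly in `t`, so dominated convergence gives `d/dt ∫ g e^{-t L} = -∫ g L e^{-t L}`.
The Gibbs expectations are quotients `E_t[f] = ∫ f e^{-t L} / ∫ e^{-t L}` with positive
denominator, and the quotient and product rules give the formula, `E[f L] - E[f] E[L]` being
`Cov(f, L)`.
-/

open MeasureTheory Real

lemma abs_mul_exp_neg_mul_le {m y r ε R : ℝ} (hε : 0 < ε) (hεr : ε ≤ r) (hrR : r ≤ R)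
    (hm : m ≤ y) :
    |y| * exp (-r * y) ≤ 1 / ε + |m| * exp (R * |m|) := by
  have hC₁ : 0 ≤ 1 / ε := by positivity
  have hC₂ : 0 ≤ |m| * exp (R * |m|) := by positivity
  rcases le_or_gt 0 y with hy | hy
  · have hy_le : y ≤ exp (ε * y) / ε := by
      rw [le_div_iff₀ hε]; nlinarith [add_one_le_exp (ε * y)]
    calc |y| * exp (-r * y) ≤ exp (ε * y) / ε * exp (-(ε * y)) := by
          rw [abs_of_nonneg hy]
          gcongr
          nlinarith
      _ = 1 / ε := by rw [exp_neg]; field_simp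
      _ ≤ _ := le_add_of_nonneg_right hC₂
  · have habs : |y| ≤ |m| := by
      rw [abs_of_neg hy, abs_of_neg (hm.trans_lt hy)]; linarith
    have hexp : exp (-r * y) ≤ exp (R * |m|) := by
      apply exp_le_exp.2
      nlinarith [(neg_le_abs y).trans habs, abs_nonneg m]
    calc |y| * exp (-r * y) ≤ |m| * exp (R * |m|) :=
          mul_le_mul habs hexp (exp_pos _).le (abs_nonneg _)
      _ ≤ _ := le_add_of_nonneg_left hC₁

section GibbsIntegral

variable {α : Type*} [MeasurableSpace α] {μ : Measure α} {L f g : α → ℝ} {m : ℝ}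

lemma aestronglyMeasurable_mul_exp_neg_mul (hg : AEStronglyMeasurable g μ)
    (hL : AEMeasurable L μ) (t : ℝ) :
    AEStronglyMeasurable (fun x => g x * exp (-t * L x)) μ :=
  hg.mul ((hL.const_mul (-t)).exp.aestronglyMeasurable)

lemma integrable_mul_exp_neg_mul (hg : Integrable g μ) (hL : AEMeasurable L μ)
    (hm : ∀ᵐ x ∂μ, m ≤ L x) {t : ℝ} (ht : 0 ≤ t) :
    Integrable (fun x => g x * exp (-t * L x)) μ := by
  have hbdd : ∀ᵐ x ∂μ, ‖exp (-t * L x)‖ ≤ exp (-t * m) := by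
    filter_upwards [hm] with x hx
    rw [norm_of_nonneg (exp_pos _).le]
    exact exp_le_exp.2 (by nlinarith)
  simpa only [mul_comm] using
    hg.bdd_mul (hL.const_mul (-t)).exp.aestronglyMeasurable hbdd

theorem hasDerivAt_integral_mul_exp_neg_mul (hg : Integrable g μ) (hL : AEMeasurable L μ)
    (hm : ∀ᵐ x ∂μ, m ≤ L x) {s : ℝ} (hs : 0 < s) :
    HasDerivAt (fun t => ∫ x, g x * exp (-t * L x) ∂μ)
      (-∫ x, g x * L x * exp (-s * L x) ∂μ) s := by
  obtain ⟨ε, hε, hsε⟩ : ∃ ε, 0 < ε ∧ s = 2 * ε := ⟨s / 2, half_pos hs, by ring⟩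
  set C := 1 / ε + |m| * exp (3 * ε * |m|)
  have hbound : ∀ᵐ x ∂μ, ∀ t ∈ Metric.ball s ε,
      ‖-(g x * L x * exp (-t * L x))‖ ≤ C * ‖g x‖ := by
    filter_upwards [hm] with x hx t ht
    have ht' := abs_lt.1 (Real.dist_eq t s ▸ Metric.mem_ball.1 ht)
    have hLt : |L x| * exp (-t * L x) ≤ C :=
      abs_mul_exp_neg_mul_le (R := 3 * ε) hε (by linarith) (by linarith) hx
    rw [norm_neg, norm_mul, norm_mul, Real.norm_eq_abs, Real.norm_eq_abs, Real.norm_eq_abs,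
      abs_of_pos (exp_pos _), mul_assoc, mul_comm C]
    exact mul_le_mul_of_nonneg_left hLt (abs_nonneg _)
  have hderiv : ∀ᵐ x ∂μ, ∀ t ∈ Metric.ball s ε,
      HasDerivAt (fun t => g x * exp (-t * L x)) (-(g x * L x * exp (-t * L x))) t :=
    Filter.Eventually.of_forall fun x t _ =>
      ((((hasDerivAt_neg t).mul_const (L x)).exp).const_mul (g x)).congr_deriv (by ring)
  have key := hasDerivAt_integral_of_dominated_loc_of_deriv_le (Metric.ball_mem_nhds s hε)
    (Filter.Eventually.of_forall fun t => aestronglyMeasurable_mul_exp_neg_mul hg.1 hL t)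
    (integrable_mul_exp_neg_mul hg hL hm hs.le)
    (aestronglyMeasurable_mul_exp_neg_mul (hg.1.mul hL.aestronglyMeasurable) hL s).neg
    hbound (hg.norm.const_mul C) hderiv
  rw [integral_neg] at key
  exact key.2

lemma exp_neg_mul_mul_exp_neg_sub_mul (a t y : ℝ) :
    exp (-a * y) * exp (-(t - a) * y) = exp (-t * y) := by
  rw [← exp_add]; congr 1; ring

theorem hasDerivAt_integral_mul_exp_neg_mul_of_lt {δ₀ δ : ℝ} (hL : AEMeasurable L μ)
    (hm : ∀ᵐ x ∂μ, m ≤ L x) (hf : Integrable (fun x => f x * exp (-δ₀ * L x)) μ)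
    (hδ : δ₀ < δ) :
    HasDerivAt (fun t => ∫ x, f x * exp (-t * L x) ∂μ)
      (-∫ x, f x * L x * exp (-δ * L x) ∂μ) δ := by
  have key := (hasDerivAt_integral_mul_exp_neg_mul hf hL hm (sub_pos.2 hδ)).comp_sub_const δ δ₀
  have hfun : (fun t => ∫ x, f x * exp (-t * L x) ∂μ)
      = fun t => ∫ x, f x * exp (-δ₀ * L x) * exp (-(t - δ₀) * L x) ∂μ := by
    funext t
    simp only [mul_assoc, exp_neg_mul_mul_exp_neg_sub_mul]
  have hval : ∫ x, f x * L x * exp (-δ * L x) ∂μ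
      = ∫ x, f x * exp (-δ₀ * L x) * L x * exp (-(δ - δ₀) * L x) ∂μ := by
    congr 1 with x
    rw [← exp_neg_mul_mul_exp_neg_sub_mul δ₀ δ]
    ring
  rw [hfun, hval]
  exact key

lemma integral_exp_neg_mul_pos {δ₀ t : ℝ} (hL : AEMeasurable L μ) (hm : ∀ᵐ x ∂μ, m ≤ L x)
    (h₁ : Integrable (fun x => exp (-δ₀ * L x)) μ) (hpos : 0 < ∫ x, exp (-δ₀ * L x) ∂μ)
    (ht : δ₀ ≤ t) :
    0 < ∫ x, exp (-t * L x) ∂μ := by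
  have : NeZero μ := ⟨by rintro rfl; simp at hpos⟩
  refine integral_exp_pos ?_
  have h := integrable_mul_exp_neg_mul h₁ hL hm (sub_nonneg.2 ht)
  simpa only [exp_neg_mul_mul_exp_neg_sub_mul] using h

end GibbsIntegral

theorem stmt6_general {n : ℕ} (B : Set (EuclideanSpace ℝ (Fin n))) (hB : MeasurableSet B)
    (Ll u v : EuclideanSpace ℝ (Fin n) → ℝ)
    (hLl : Measurable Ll)
    (Lmin δ₀ : ℝ)
    (hbdd : ∀ θ ∈ B, Lmin ≤ Ll θ)
    (hint1 : IntegrableOn (fun θ => Real.exp (-δ₀ * Ll θ)) B)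
    (hpos : 0 < ∫ θ in B, Real.exp (-δ₀ * Ll θ))
    (hintu : IntegrableOn (fun θ => u θ * Real.exp (-δ₀ * Ll θ)) B)
    (hintv : IntegrableOn (fun θ => v θ * Real.exp (-δ₀ * Ll θ)) B) :
    ∀ δ, δ₀ < δ →
      HasDerivAt
        (fun t => ((∫ θ in B, u θ * Real.exp (-t * Ll θ)) / (∫ θ in B, Real.exp (-t * Ll θ))) *
          ((∫ θ in B, v θ * Real.exp (-t * Ll θ)) / (∫ θ in B, Real.exp (-t * Ll θ))))
        (-((∫ θ in B, u θ * Ll θ * (Real.exp (-δ * Ll θ) / ∫ γ in B, Real.exp (-δ * Ll γ))) -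
              (∫ θ in B, u θ * (Real.exp (-δ * Ll θ) / ∫ γ in B, Real.exp (-δ * Ll γ))) *
                (∫ θ in B, Ll θ * (Real.exp (-δ * Ll θ) / ∫ γ in B, Real.exp (-δ * Ll γ)))) *
            (∫ θ in B, v θ * (Real.exp (-δ * Ll θ) / ∫ γ in B, Real.exp (-δ * Ll γ))) -
          (∫ θ in B, u θ * (Real.exp (-δ * Ll θ) / ∫ γ in B, Real.exp (-δ * Ll γ))) *
            ((∫ θ in B, v θ * Ll θ * (Real.exp (-δ * Ll θ) / ∫ γ in B, Real.exp (-δ * Ll γ))) -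
              (∫ θ in B, v θ * (Real.exp (-δ * Ll θ) / ∫ γ in B, Real.exp (-δ * Ll γ))) *
                (∫ θ in B, Ll θ * (Real.exp (-δ * Ll θ) / ∫ γ in B, Real.exp (-δ * Ll γ)))))
        δ := by
  intro δ hδ
  have hL : AEMeasurable Ll (volume.restrict B) := hLl.aemeasurable
  have hm : ∀ᵐ θ ∂(volume.restrict B), Lmin ≤ Ll θ := ae_restrict_of_forall_mem hB hbdd
  have hZ : HasDerivAt (fun t => ∫ θ in B, exp (-t * Ll θ))
      (-∫ θ in B, Ll θ * exp (-δ * Ll θ)) δ := by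
    have hint1' : IntegrableOn (fun θ => 1 * exp (-δ₀ * Ll θ)) B := by
      simp only [one_mul]; exact hint1
    simpa only [one_mul] using hasDerivAt_integral_mul_exp_neg_mul_of_lt hL hm hint1' hδ
  have hU := hasDerivAt_integral_mul_exp_neg_mul_of_lt hL hm hintu hδ
  have hV := hasDerivAt_integral_mul_exp_neg_mul_of_lt hL hm hintv hδ
  have hZpos := integral_exp_neg_mul_pos hL hm hint1 hpos hδ.le
  refine ((hU.div hZ hZpos.ne').mul (hV.div hZ hZpos.ne')).congr_deriv ?_
  simp only [Pi.div_apply, mul_div_assoc', integral_div]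
  -- Otherwise `field_simp` rewrites the exponents under the integrals into mismatched forms.
  generalize (∫ θ in B, exp (-δ * Ll θ)) = Z at hZpos ⊢
  generalize (∫ θ in B, u θ * exp (-δ * Ll θ)) = U
  generalize (∫ θ in B, v θ * exp (-δ * Ll θ)) = V
  generalize (∫ θ in B, Ll θ * exp (-δ * Ll θ)) = M
  generalize (∫ θ in B, u θ * Ll θ * exp (-δ * Ll θ)) = UL
  generalize (∫ θ in B, v θ * Ll θ * exp (-δ * Ll θ)) = VL
  field_simp
  ring

theorem stmt6 {n : ℕ} (B : Set (EuclideanSpace ℝ (Fin n))) (hB : MeasurableSet B)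
    (Ll u v : EuclideanSpace ℝ (Fin n) → ℝ)
    (hLl : Measurable Ll) (hu : Measurable u) (hv : Measurable v)
    (hu0 : ∀ θ ∈ B, 0 ≤ u θ) (hv0 : ∀ θ ∈ B, 0 ≤ v θ)
    (Lmin δ₀ : ℝ) (hδ₀ : 0 ≤ δ₀)
    (hbdd : ∀ θ ∈ B, Lmin ≤ Ll θ)
    (hint1 : IntegrableOn (fun θ => Real.exp (-δ₀ * Ll θ)) B)
    (hpos : 0 < ∫ θ in B, Real.exp (-δ₀ * Ll θ))
    (hintu : IntegrableOn (fun θ => u θ * Real.exp (-δ₀ * Ll θ)) B)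
    (hintv : IntegrableOn (fun θ => v θ * Real.exp (-δ₀ * Ll θ)) B)
    (hintL : IntegrableOn (fun θ => Ll θ * Real.exp (-δ₀ * Ll θ)) B)
    (hintuL : IntegrableOn (fun θ => u θ * Ll θ * Real.exp (-δ₀ * Ll θ)) B)
    (hintvL : IntegrableOn (fun θ => v θ * Ll θ * Real.exp (-δ₀ * Ll θ)) B) :
    ∀ δ, δ₀ < δ →
      HasDerivAt
        (fun t => ((∫ θ in B, u θ * Real.exp (-t * Ll θ)) / (∫ θ in B, Real.exp (-t * Ll θ))) *
          ((∫ θ in B, v θ * Real.exp (-t * Ll θ)) / (∫ θ in B, Real.exp (-t * Ll θ))))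
        (-((∫ θ in B, u θ * Ll θ * (Real.exp (-δ * Ll θ) / ∫ γ in B, Real.exp (-δ * Ll γ))) -
              (∫ θ in B, u θ * (Real.exp (-δ * Ll θ) / ∫ γ in B, Real.exp (-δ * Ll γ))) *
                (∫ θ in B, Ll θ * (Real.exp (-δ * Ll θ) / ∫ γ in B, Real.exp (-δ * Ll γ)))) *
            (∫ θ in B, v θ * (Real.exp (-δ * Ll θ) / ∫ γ in B, Real.exp (-δ * Ll γ))) -
          (∫ θ in B, u θ * (Real.exp (-δ * Ll θ) / ∫ γ in B, Real.exp (-δ * Ll γ))) *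
            ((∫ θ in B, v θ * Ll θ * (Real.exp (-δ * Ll θ) / ∫ γ in B, Real.exp (-δ * Ll γ))) -
              (∫ θ in B, v θ * (Real.exp (-δ * Ll θ) / ∫ γ in B, Real.exp (-δ * Ll γ))) *
                (∫ θ in B, Ll θ * (Real.exp (-δ * Ll θ) / ∫ γ in B, Real.exp (-δ * Ll γ)))))
        δ :=
  stmt6_general B hB Ll u v hLl Lmin δ₀ hbdd hint1 hpos hintu hintv
end

section
/- Let B ⊆ ℝⁿ be a bounded measurable set of finite positive measure, f : B → ℝ measurable and bounded below. Fix M̃ < M and suppose the set C̃ = {f ≤ M̃} ∩ B has positive measure V₀ > 0, and let C = {f ≤ M} ∩ B. If δ > 0 satisfies Vol(B∖C)/((1-α)·V₀) < exp((M - M̃)·δ) for some α ∈ (0,1), then ∫_{B∖C} exp(-δ f) < (1-α)·∫_C exp(-δ f), and consequently (∫_C exp(-δ f))/(∫_B exp(-δ f)) > α. -/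
/-!
On `B \ C` we have `f > M`, so `exp (-δ f) ≤ exp (-δ M)` there and the integral over `B \ C` is at
most `exp (-δ M) · Vol (B \ C)`; on `C̃ ⊆ C` we have `f ≤ M̃`, so the integral over `C` is at least
`exp (-δ M̃) · V₀`. The hypothesis on `δ` says precisely that the first bound is less than `1 - α`
times the second. Splitting `∫_B = ∫_C + ∫_{B \ C}` turns this into the bound on the ratio.
-/

open MeasureTheory Real Set

section Boltzmann

variable {X : Type*} [MeasurableSpace X] {μ : Measure X} {f : X → ℝ} {s : Set X} {δ : ℝ}

lemma integrableOn_exp_neg_mul_of_le (hf : Measurable f) (hs : MeasurableSet s) (hμs : μ s ≠ ⊤)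
    (hδ : 0 ≤ δ) {L : ℝ} (hL : ∀ x ∈ s, L ≤ f x) : IntegrableOn (fun x ↦ exp (-δ * f x)) s μ :=
  Measure.integrableOn_of_bounded hμs (M := exp (-δ * L))
    (measurable_exp.comp (hf.const_mul _)).aestronglyMeasurable <|
    ae_restrict_of_forall_mem hs fun x hx ↦ by
      rw [norm_of_nonneg (exp_pos _).le]
      exact exp_le_exp.mpr (by nlinarith [hL x hx])

lemma setIntegral_exp_neg_mul_le (hs : μ s < ⊤) (hδ : 0 ≤ δ) {M : ℝ} (hM : ∀ x ∈ s, M ≤ f x) :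
    ∫ x in s, exp (-δ * f x) ∂μ ≤ exp (-δ * M) * μ.real s := by
  refine (Real.le_norm_self _).trans (norm_setIntegral_le_of_norm_le_const hs fun x hx ↦ ?_)
  rw [norm_of_nonneg (exp_pos _).le]
  exact exp_le_exp.mpr (by nlinarith [hM x hx])

lemma exp_neg_mul_mul_measureReal_le_setIntegral {t : Set X} (ht : MeasurableSet t) (hts : t ⊆ s)
    (hμt : μ t ≠ ⊤) (hδ : 0 ≤ δ) {M : ℝ} (hM : ∀ x ∈ t, f x ≤ M)
    (hint : IntegrableOn (fun x ↦ exp (-δ * f x)) s μ) :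
    exp (-δ * M) * μ.real t ≤ ∫ x in s, exp (-δ * f x) ∂μ :=
  calc exp (-δ * M) * μ.real t ≤ ∫ x in t, exp (-δ * f x) ∂μ :=
        setIntegral_ge_of_const_le_real ht hμt
          (fun x hx ↦ exp_le_exp.mpr (by nlinarith [hM x hx])) (hint.mono_set hts)
    _ ≤ ∫ x in s, exp (-δ * f x) ∂μ :=
        setIntegral_mono_set hint (.of_forall fun x ↦ (exp_pos _).le) hts.eventuallyLE

lemma lt_setIntegral_div_setIntegral_of_sdiff_lt {g : X → ℝ} {s t : Set X} {α : ℝ}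
    (ht : MeasurableSet t) (hts : t ⊆ s) (hg : IntegrableOn g s μ) (hg0 : 0 ≤ g)
    (hpos : 0 < ∫ x in t, g x ∂μ)
    (h : ∫ x in s \ t, g x ∂μ < (1 - α) * ∫ x in t, g x ∂μ) :
    α < (∫ x in t, g x ∂μ) / ∫ x in s, g x ∂μ := by
  rw [setIntegral_sdiff ht hg hts] at h
  have hsdiff : 0 ≤ ∫ x in s \ t, g x ∂μ := integral_nonneg hg0
  rw [setIntegral_sdiff ht hg hts] at hsdiff
  rw [lt_div_iff₀ (by linarith)]
  rcases le_or_gt α 0 with hα | hα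
  · nlinarith
  · nlinarith [sq_nonneg (1 - α)]

end Boltzmann

lemma exp_neg_mul_mul_lt_of_div_lt_exp {v c M Mt δ : ℝ} (hc : 0 < c)
    (h : v / c < exp ((M - Mt) * δ)) : exp (-δ * M) * v < exp (-δ * Mt) * c := by
  have hv : v < exp ((M - Mt) * δ) * c := (div_lt_iff₀ hc).mp h
  calc exp (-δ * M) * v < exp (-δ * M) * (exp ((M - Mt) * δ) * c) := by gcongr
    _ = exp (-δ * Mt) * c := by rw [← mul_assoc, ← exp_add]; ring_nf

theorem stmt9_general {n : ℕ} (B : Set (EuclideanSpace ℝ (Fin n))) (hB : MeasurableSet B)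
    (hBfin : volume B < ⊤)
    (f : EuclideanSpace ℝ (Fin n) → ℝ) (hf : Measurable f)
    (Lmin : ℝ) (hbdd : ∀ θ ∈ B, Lmin ≤ f θ)
    (Mt M : ℝ) (hMtM : Mt < M)
    (Ct C : Set (EuclideanSpace ℝ (Fin n)))
    (hCt : Ct = {θ | f θ ≤ Mt} ∩ B) (hC : C = {θ | f θ ≤ M} ∩ B)
    (V₀ : ℝ) (hV₀def : V₀ = (volume Ct).toReal) (hV₀ : 0 < V₀)
    (α : ℝ) (hα : α ∈ Set.Ioo (0 : ℝ) 1)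
    (δ : ℝ) (hδ : 0 < δ)
    (hkey : (volume (B \ C)).toReal / ((1 - α) * V₀) < Real.exp ((M - Mt) * δ)) :
    (∫ θ in B \ C, Real.exp (-δ * f θ)) < (1 - α) * ∫ θ in C, Real.exp (-δ * f θ) ∧
      α < (∫ θ in C, Real.exp (-δ * f θ)) / (∫ θ in B, Real.exp (-δ * f θ)) := by
  subst hC hCt hV₀def
  have h1α : 0 < 1 - α := sub_pos.mpr hα.2
  have hsub : ∀ {c : ℝ}, MeasurableSet ({θ | f θ ≤ c} ∩ B) :=
    (measurableSet_le hf measurable_const).inter hB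
  have hint := integrableOn_exp_neg_mul_of_le hf hB hBfin.ne hδ.le hbdd
  have hupper := setIntegral_exp_neg_mul_le (μ := volume) (s := B \ ({θ | f θ ≤ M} ∩ B))
    ((measure_mono sdiff_subset).trans_lt hBfin) hδ.le (M := M)
    (fun θ hθ ↦ (not_le.mp fun h ↦ hθ.2 ⟨h, hθ.1⟩).le)
  have hlower := exp_neg_mul_mul_measureReal_le_setIntegral (μ := volume) (f := f)
    (s := {θ | f θ ≤ M} ∩ B) hsub
    (inter_subset_inter_left _ fun θ (h : f θ ≤ Mt) ↦ h.trans hMtM.le)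
    ((measure_mono inter_subset_right).trans_lt hBfin).ne hδ.le (fun θ hθ ↦ hθ.1)
    (hint.mono_set inter_subset_right)
  have hmain : ∫ θ in B \ ({θ | f θ ≤ M} ∩ B), exp (-δ * f θ) <
      (1 - α) * ∫ θ in {θ | f θ ≤ M} ∩ B, exp (-δ * f θ) :=
    calc _ ≤ _ := hupper
      _ < exp (-δ * Mt) * ((1 - α) * volume.real ({θ | f θ ≤ Mt} ∩ B)) :=
        exp_neg_mul_mul_lt_of_div_lt_exp (mul_pos h1α hV₀) hkey
      _ ≤ _ := by rw [mul_left_comm]; exact mul_le_mul_of_nonneg_left hlower h1α.le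
  exact ⟨hmain, lt_setIntegral_div_setIntegral_of_sdiff_lt hsub inter_subset_right hint
    (fun θ ↦ (exp_pos _).le) (hlower.trans_lt' (mul_pos (exp_pos _) hV₀)) hmain⟩

theorem stmt9 {n : ℕ} (B : Set (EuclideanSpace ℝ (Fin n))) (hB : MeasurableSet B)
    (hBbdd : Bornology.IsBounded B) (hBfin : volume B < ⊤) (hBpos : 0 < volume B)
    (f : EuclideanSpace ℝ (Fin n) → ℝ) (hf : Measurable f)
    (Lmin : ℝ) (hbdd : ∀ θ ∈ B, Lmin ≤ f θ)
    (Mt M : ℝ) (hMtM : Mt < M)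
    (Ct C : Set (EuclideanSpace ℝ (Fin n)))
    (hCt : Ct = {θ | f θ ≤ Mt} ∩ B) (hC : C = {θ | f θ ≤ M} ∩ B)
    (V₀ : ℝ) (hV₀def : V₀ = (volume Ct).toReal) (hV₀ : 0 < V₀)
    (α : ℝ) (hα : α ∈ Set.Ioo (0 : ℝ) 1)
    (δ : ℝ) (hδ : 0 < δ)
    (hkey : (volume (B \ C)).toReal / ((1 - α) * V₀) < Real.exp ((M - Mt) * δ)) :
    (∫ θ in B \ C, Real.exp (-δ * f θ)) < (1 - α) * ∫ θ in C, Real.exp (-δ * f θ) ∧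
      α < (∫ θ in C, Real.exp (-δ * f θ)) / (∫ θ in B, Real.exp (-δ * f θ)) :=
  stmt9_general B hB hBfin f hf Lmin hbdd Mt M hMtM Ct C hCt hC V₀ hV₀def hV₀ α hα δ hδ hkey
end
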